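/- arXiv:2601.21237 — 8 statements merged into one kernel-verified Lean document; each statement's English description precedes it below -/
import Mathlib

section
/- Let 𝒞 be a collection, i ∈ ℕ a noise level, and S a finite subset of the universe with 𝒞(S,i) nonempty and ⟨S⟩_{𝒞,i} finite. Let S' = S ∪ ⟨S⟩_{𝒞,i}. Then 𝒞(S,i) = 𝒞(S',i), and consequently ⟨S'⟩_{𝒞,i} = ⟨S⟩_{𝒞,i} ⊆ S'. -/
open Set Classical

/-- The set of languages in `𝒞` consistent with sample `S` at noise level `i`. -/
def Consistent {U : Type*} (𝒞 : Set (Set U)) (S : Set U) (i : ℕ) : Set (Set U) :=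
  {L | L ∈ 𝒞 ∧ (S \ L).encard ≤ (i : ℕ∞)}

/-- The noisy closure of `S` at noise level `i`. -/
noncomputable def NoisyClosure {U : Type*} (𝒞 : Set (Set U)) (S : Set U) (i : ℕ) : Set U :=
  if (Consistent 𝒞 S i).Nonempty then ⋂ L ∈ Consistent 𝒞 S i, L else ∅

/-- The noisy closure dimension of `𝒞` at noise level `i`, as an extended natural. -/
noncomputable def NC {U : Type*} (𝒞 : Set (Set U)) (i : ℕ) : ℕ∞ :=
  ⨆ S ∈ {S : Set U | S.Finite ∧ (Consistent 𝒞 S i).Nonempty ∧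
      (NoisyClosure 𝒞 S i).Finite}, S.encard

/-- `x` is an enumeration of `K` with noise level at most `i`. -/
def IsNoisyEnum {U : Type*} (K : Set U) (i : ℕ) (x : ℕ → U) : Prop :=
  Function.Injective x ∧ K ⊆ Set.range x ∧ (Set.range x \ K).encard ≤ (i : ℕ∞)

/-- The set of strings revealed up to and including time `t`. -/
def seenSet {U : Type*} (x : ℕ → U) (t : ℕ) : Set U := x '' Set.Iic t

/-- The prefix `x₀, …, x_t` of the enumeration, as a list fed to the generator. -/
def prefixList {U : Type*} (x : ℕ → U) (t : ℕ) : List U := (List.range (t + 1)).map x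

/-- `G` uniformly generates with noise level `i` for `𝒞`. -/
def UniformGen {U : Type*} (𝒞 : Set (Set U)) (i : ℕ) (G : List U → U) : Prop :=
  ∃ t0 : ℕ, ∀ K ∈ 𝒞, ∀ x : ℕ → U, IsNoisyEnum K i x →
    ∀ t ≥ t0, G (prefixList x t) ∈ K \ seenSet x t

/-- `G` non-uniformly generates with noise level `i` for `𝒞`. -/
def NonUniformGen {U : Type*} (𝒞 : Set (Set U)) (i : ℕ) (G : List U → U) : Prop :=
  ∀ K ∈ 𝒞, ∃ t0 : ℕ, ∀ x : ℕ → U, IsNoisyEnum K i x →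
    ∀ t ≥ t0, G (prefixList x t) ∈ K \ seenSet x t

/-- `G` uniformly noise-dependently generates for `𝒞`. -/
def UniformNoiseDepGen {U : Type*} (𝒞 : Set (Set U)) (G : List U → U) : Prop :=
  ∀ n : ℕ, ∃ t0 : ℕ, ∀ K ∈ 𝒞, ∀ x : ℕ → U, IsNoisyEnum K n x →
    ∀ t ≥ t0, G (prefixList x t) ∈ K \ seenSet x t

/-- `G` non-uniformly noise-dependently generates for `𝒞`. -/
def NonUniformNoiseDepGen {U : Type*} (𝒞 : Set (Set U)) (G : List U → U) : Prop :=
  ∀ n : ℕ, ∀ K ∈ 𝒞, ∃ t0 : ℕ, ∀ x : ℕ → U, IsNoisyEnum K n x →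
    ∀ t ≥ t0, G (prefixList x t) ∈ K \ seenSet x t

/-- The infinite "column" `B c` in the universe `ℕ × ℕ`. -/
def column (c : ℕ) : Set (ℕ × ℕ) := {p | p.1 = c}

/-- The collection of all nonempty unions of columns. -/
def columnCollection : Set (Set (ℕ × ℕ)) :=
  {L | ∃ x : Set ℕ, x.Nonempty ∧ L = ⋃ c ∈ x, column c}

theorem stmt1 {U : Type*} [Countable U] (𝒞 : Set (Set U)) (S : Set U) (i : ℕ)
    (hSfin : S.Finite) (hne : (Consistent 𝒞 S i).Nonempty)
    (hclos : (NoisyClosure 𝒞 S i).Finite) :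
    Consistent 𝒞 (S ∪ NoisyClosure 𝒞 S i) i = Consistent 𝒞 S i ∧
    NoisyClosure 𝒞 (S ∪ NoisyClosure 𝒞 S i) i = NoisyClosure 𝒞 S i ∧
    NoisyClosure 𝒞 S i ⊆ S ∪ NoisyClosure 𝒞 S i := by
  have hCeq : NoisyClosure 𝒞 S i = ⋂ L ∈ Consistent 𝒞 S i, L := by
    simp only [NoisyClosure, if_pos hne]
  set C := NoisyClosure 𝒞 S i with hC
  have hCsub : ∀ L ∈ Consistent 𝒞 S i, C ⊆ L := by
    intro L hL
    rw [hCeq]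
    exact Set.biInter_subset_of_mem hL
  have hcons : Consistent 𝒞 (S ∪ C) i = Consistent 𝒞 S i := by
    ext L
    constructor
    · rintro ⟨hL𝒞, hLe⟩
      refine ⟨hL𝒞, le_trans (Set.encard_mono ?_) hLe⟩
      exact Set.diff_subset_diff_left Set.subset_union_left
    · rintro ⟨hL𝒞, hLe⟩
      refine ⟨hL𝒞, ?_⟩
      have : (S ∪ C) \ L = S \ L := by
        rw [Set.union_diff_distrib]
        have : C \ L = ∅ := Set.diff_eq_empty.2 (hCsub L ⟨hL𝒞, hLe⟩)
        rw [this, Set.union_empty]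
      rw [this]; exact hLe
  refine ⟨hcons, ?_, Set.subset_union_right⟩
  show NoisyClosure 𝒞 (S ∪ C) i = C
  simp only [NoisyClosure, hcons, if_pos hne]
  exact hCeq.symm
end

section
/- Let 𝒞 be a collection of languages, i ≥ 2 a noise level, and k ≥ 1 an integer. Suppose S = S₁ ∪ ⋯ ∪ S_k is a union of k pairwise disjoint sets each of size k, and ⟨S⟩_{𝒞,i} is finite, and each ⟨S_j⟩_{𝒞,i−1} is infinite. Let A = {x₁,…,x_k} where x_j ∈ ⟨S_j⟩_{𝒞,i−1} are distinct. Then every language L ∈ 𝒞(S,i) satisfies |A \ L| ≤ 1; that is, 𝒞(S,i) ⊆ 𝒞(A,1). -/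
open Set Classical

theorem stmt2 {U : Type*} [Countable U] (𝒞 : Set (Set U)) (i k : ℕ)
    (hi : 2 ≤ i) (hk : 1 ≤ k) (S : Fin k → Set U)
    (hdisj : ∀ j l, j ≠ l → Disjoint (S j) (S l))
    (hsize : ∀ j, (S j).encard = (k : ℕ∞))
    (hSclos : (NoisyClosure 𝒞 (⋃ j, S j) i).Finite)
    (hSjclos : ∀ j, (NoisyClosure 𝒞 (S j) (i - 1)).Infinite)
    (x : Fin k → U) (hxinj : Function.Injective x)
    (hx : ∀ j, x j ∈ NoisyClosure 𝒞 (S j) (i - 1)) :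
    (∀ L ∈ Consistent 𝒞 (⋃ j, S j) i, (Set.range x \ L).encard ≤ 1) ∧
    Consistent 𝒞 (⋃ j, S j) i ⊆ Consistent 𝒞 (Set.range x) 1 := by
  have key : ∀ L ∈ Consistent 𝒞 (⋃ j, S j) i, ∀ j : Fin k, x j ∉ L →
      (i : ℕ∞) ≤ (S j \ L).encard := by
    intro L hL j hxj
    by_contra hlt
    push_neg at hlt
    have hle : (S j \ L).encard ≤ ((i - 1 : ℕ) : ℕ∞) := by
      have hi' : (i : ℕ∞) = ((i - 1 : ℕ) : ℕ∞) + 1 := by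
        norm_cast; omega
      rw [hi', ENat.lt_add_one_iff (by simp)] at hlt
      exact hlt
    have hLc : L ∈ Consistent 𝒞 (S j) (i - 1) := ⟨hL.1, hle⟩
    have hne : (Consistent 𝒞 (S j) (i - 1)).Nonempty := ⟨L, hLc⟩
    have := hx j
    rw [NoisyClosure, if_pos hne] at this
    exact hxj (Set.mem_iInter₂.mp this L hLc)
  have main : ∀ L ∈ Consistent 𝒞 (⋃ j, S j) i, (Set.range x \ L).encard ≤ 1 := by
    intro L hL
    rw [Set.encard_le_one_iff]
    rintro a b ⟨⟨j1, rfl⟩, ha⟩ ⟨⟨j2, rfl⟩, hb⟩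
    by_contra hne
    have hj : j1 ≠ j2 := fun h => hne (by rw [h])
    have h1 := key L hL j1 ha
    have h2 := key L hL j2 hb
    have hdisj' : Disjoint (S j1 \ L) (S j2 \ L) :=
      (hdisj j1 j2 hj).mono Set.diff_subset Set.diff_subset
    have hsub : (S j1 \ L) ∪ (S j2 \ L) ⊆ (⋃ j, S j) \ L := by
      rintro y (⟨hy, hyL⟩ | ⟨hy, hyL⟩)
      · exact ⟨Set.mem_iUnion.mpr ⟨j1, hy⟩, hyL⟩
      · exact ⟨Set.mem_iUnion.mpr ⟨j2, hy⟩, hyL⟩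
    have := calc ((i + i : ℕ) : ℕ∞) = (i : ℕ∞) + (i : ℕ∞) := by push_cast; ring
      _ ≤ (S j1 \ L).encard + (S j2 \ L).encard := add_le_add h1 h2
      _ = ((S j1 \ L) ∪ (S j2 \ L)).encard := (Set.encard_union_eq hdisj').symm
      _ ≤ ((⋃ j, S j) \ L).encard := Set.encard_le_encard hsub
      _ ≤ (i : ℕ∞) := hL.2
    rw [Nat.cast_le] at this
    omega
  exact ⟨main, fun L hL => ⟨hL.1, main L hL⟩⟩
end

section
/- For any collection 𝒞 and any noise level i ≥ 2, the noisy closure dimension satisfies NC_{i−1}(𝒞) ≥ ⌊√(NC_i(𝒞))⌋. In particular, if NC_i(𝒞) = ∞ then NC_{i−1}(𝒞) = ∞. -/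
open Set Classical

/-! Let `S` be a level-`(n + 1)` witness with `m² ≤ |S|` and suppose `NC_n < m`. Fix a language
`L₀` consistent with `S` and split `S` into `m` disjoint blocks of size `m`, each with at most `n`
points outside `L₀` (one per block if there are at most `m` such points; otherwise `m ≤ n` and any
split works). Each block is consistent at level `n` but larger than `NC_n`, so its level-`n` closure
is infinite, and we can pick distinct points `u_j` in these closures. A language consistent with
`S` at level `n + 1` that misses `u_j` must have all of its (nonzero) noise on `S` inside block `j`,
so it misses at most one `u_j`. Hence `{u_j}` is consistent at level `n ≥ 1` with every such
language, its closure lies in the finite closure of `S`, and it is a level-`n` witness of size `m`.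
-/

open Function
open scoped Finset

lemma exists_pairwise_disjoint_blocks {α : Type*} [DecidableEq α] {B S : Finset α} {m r : ℕ}
    (hBS : B ⊆ S) (hB : #B ≤ m) (hS : m * r ≤ #S) :
    ∃ T : Fin m → Finset α, Pairwise (Disjoint on T) ∧
      ∀ j, T j ⊆ S ∧ #(T j) = r ∧ #(T j ∩ B) ≤ 1 := by
  rcases Nat.eq_zero_or_pos r with rfl | hr
  · exact ⟨fun _ => ∅, fun _ _ _ => disjoint_bot_left, by simp⟩
  induction m generalizing B S with
  | zero => exact ⟨Fin.elim0, fun j => j.elim0, fun j => j.elim0⟩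
  | succ m ih =>
    -- The first block takes one element of `B` (if any) and is filled up from `S \ B`.
    obtain ⟨s, hsB, hs⟩ := Finset.exists_subset_card_eq (min_le_right 1 #B)
    have hgood : #(S \ B) = #S - #B := Finset.card_sdiff_of_subset hBS
    have hmr : m ≤ m * r := Nat.le_mul_of_pos_right m hr
    obtain ⟨T₀, hsT₀, hT₀, hT₀card⟩ := Finset.exists_subsuperset_card_eq
      (s := s) (t := s ∪ (S \ B)) (n := r) Finset.subset_union_left (by omega) (by
        rw [Finset.card_union_of_disjoint (Finset.disjoint_of_subset_left hsB Finset.disjoint_sdiff),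
          hgood]
        rw [Nat.succ_mul] at hS
        omega)
    have hT₀S : T₀ ⊆ S := hT₀.trans (Finset.union_subset (hsB.trans hBS) Finset.sdiff_subset)
    have hT₀B : T₀ ∩ B = s := by
      refine Finset.Subset.antisymm (fun x hx => ?_) (Finset.subset_inter hsT₀ hsB)
      rw [Finset.mem_inter] at hx
      rcases Finset.mem_union.1 (hT₀ hx.1) with h | h
      exacts [h, absurd hx.2 (Finset.mem_sdiff.1 h).2]
    obtain ⟨T, hdisj, hT⟩ := ih (B := B \ s) (S := S \ T₀)
      (fun x hx => Finset.mem_sdiff.2 ⟨hBS (Finset.mem_sdiff.1 hx).1, fun h =>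
        (Finset.mem_sdiff.1 hx).2 (hT₀B ▸ Finset.mem_inter.2 ⟨h, (Finset.mem_sdiff.1 hx).1⟩)⟩)
      (by rw [Finset.card_sdiff_of_subset hsB]; omega)
      (by rw [Finset.card_sdiff_of_subset hT₀S, hT₀card]; rw [Nat.succ_mul] at hS; omega)
    have hT₀T : ∀ j, Disjoint T₀ (T j) :=
      fun j => Finset.disjoint_of_subset_right (hT j).1 Finset.disjoint_sdiff
    refine ⟨Fin.cons T₀ T, ?_,
      Fin.cases ⟨hT₀S, hT₀card, by rw [Fin.cons_zero, hT₀B, hs]; omega⟩ fun j => ?_⟩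
    · intro j l hjl
      cases j using Fin.cases <;> cases l using Fin.cases
      · exact absurd rfl hjl
      · exact hT₀T _
      · exact (hT₀T _).symm
      · exact hdisj fun h => hjl (congrArg Fin.succ h)
    · refine ⟨(hT j).1.trans Finset.sdiff_subset, (hT j).2.1,
        (Finset.card_le_card ?_).trans (hT j).2.2⟩
      intro x hx
      simp only [Fin.cons_succ, Finset.mem_inter, Finset.mem_sdiff] at hx ⊢
      exact ⟨hx.1, hx.2, fun h => ((Finset.mem_sdiff.1 ((hT j).1 hx.1)).2 (hsT₀ h))⟩

theorem exists_injective_forall_mem_of_infinite {ι α : Type*} [Fintype ι] {A : ι → Set α}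
    (hA : ∀ i, (A i).Infinite) : ∃ u : ι → α, Injective u ∧ ∀ i, u i ∈ A i := by
  choose t ht hcard using fun i => (hA i).exists_subset_card_eq (Fintype.card ι)
  obtain ⟨u, hu, hut⟩ := (Finset.all_card_le_biUnion_card_iff_exists_injective t).1 fun s => by
    rcases s.eq_empty_or_nonempty with rfl | ⟨i, hi⟩
    · simp
    · calc #s ≤ Fintype.card ι := s.card_le_univ
        _ = #(t i) := (hcard i).symm
        _ ≤ #(s.biUnion t) := Finset.card_le_card (Finset.subset_biUnion_of_mem t hi)
  exact ⟨u, hu, fun i => ht i (hut i)⟩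

section NoisyClosure

variable {U : Type*} {𝒞 : Set (Set U)}

lemma encard_le_NC {S : Set U} {i : ℕ} (hS : S.Finite) (hcons : (Consistent 𝒞 S i).Nonempty)
    (hcl : (NoisyClosure 𝒞 S i).Finite) : S.encard ≤ NC 𝒞 i := by
  unfold NC
  exact le_biSup _ ⟨hS, hcons, hcl⟩

lemma noisyClosure_infinite_of_NC_lt {T : Set U} {i : ℕ} (hT : T.Finite)
    (hcons : (Consistent 𝒞 T i).Nonempty) (h : NC 𝒞 i < T.encard) :
    (NoisyClosure 𝒞 T i).Infinite :=
  fun hcl => h.not_ge (encard_le_NC hT hcons hcl)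

lemma mem_of_mem_noisyClosure {S L : Set U} {i : ℕ} {x : U} (hx : x ∈ NoisyClosure 𝒞 S i)
    (hL : L ∈ Consistent 𝒞 S i) : x ∈ L := by
  rw [NoisyClosure, if_pos ⟨L, hL⟩] at hx
  exact mem_iInter₂.1 hx L hL

lemma noisyClosure_subset_of_consistent_subset {S T : Set U} {i j : ℕ}
    (hsub : Consistent 𝒞 S i ⊆ Consistent 𝒞 T j) (hcons : (Consistent 𝒞 S i).Nonempty) :
    NoisyClosure 𝒞 T j ⊆ NoisyClosure 𝒞 S i := by
  intro x hx
  rw [NoisyClosure, if_pos hcons]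
  exact mem_iInter₂.2 fun L hL => mem_of_mem_noisyClosure hx (hsub hL)

lemma nonempty_diff_subset_of_notMem_noisyClosure {S T L : Set U} {n : ℕ} {u : U}
    (hS : S.Finite) (hTS : T ⊆ S) (hL : L ∈ Consistent 𝒞 S (n + 1))
    (hu : u ∈ NoisyClosure 𝒞 T n) (huL : u ∉ L) : (S \ L).Nonempty ∧ S \ L ⊆ T := by
  -- `L` is not consistent with `T` at level `n`, so `T \ L` already exhausts the budget of `S \ L`.
  have hT : ((n + 1 : ℕ) : ℕ∞) ≤ (T \ L).encard := by
    by_contra! h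
    exact huL (mem_of_mem_noisyClosure hu ⟨hL.1, Order.le_of_lt_add_one (by exact_mod_cast h)⟩)
  have heq : T \ L = S \ L := Finite.eq_of_subset_of_encard_le'
    (hS.subset sdiff_subset) (sdiff_subset_sdiff_left hTS) (hL.2.trans hT)
  refine ⟨?_, heq ▸ sdiff_subset⟩
  rw [← heq, ← encard_ne_zero]
  exact fun h0 => by simp [h0] at hT

lemma le_NC_of_pairwise_disjoint {S : Set U} {n m : ℕ} (hn : 1 ≤ n) (hS : S.Finite)
    (hcons : (Consistent 𝒞 S (n + 1)).Nonempty) (hcl : (NoisyClosure 𝒞 S (n + 1)).Finite)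
    (T : Fin m → Set U) (hdisj : Pairwise (Disjoint on T)) (hTS : ∀ j, T j ⊆ S)
    (hT : ∀ j, (NoisyClosure 𝒞 (T j) n).Infinite) : (m : ℕ∞) ≤ NC 𝒞 n := by
  obtain ⟨u, hu, huT⟩ := exists_injective_forall_mem_of_infinite hT
  have hsub : Consistent 𝒞 S (n + 1) ⊆ Consistent 𝒞 (range u) n := by
    refine fun L hL => ⟨hL.1, le_trans ?_ (show (1 : ℕ∞) ≤ n by exact_mod_cast hn)⟩
    rw [encard_le_one_iff]
    rintro _ _ ⟨⟨j, rfl⟩, hj⟩ ⟨⟨l, rfl⟩, hl⟩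
    obtain ⟨⟨x, hx⟩, hxj⟩ := nonempty_diff_subset_of_notMem_noisyClosure hS (hTS j) hL (huT j) hj
    have hxl := (nonempty_diff_subset_of_notMem_noisyClosure hS (hTS l) hL (huT l) hl).2 hx
    by_contra hne
    exact Set.disjoint_left.1 (hdisj fun h => hne (congrArg u h)) (hxj hx) hxl
  calc (m : ℕ∞) ≤ (range u).encard := by simpa using hu.encard_range
    _ ≤ NC 𝒞 n := encard_le_NC (finite_range u) (hcons.mono hsub)
      (hcl.subset (noisyClosure_subset_of_consistent_subset hsub hcons))

lemma exists_blocks_encard_diff_le {S : Finset U} {L : Set U} {n m : ℕ} (hn : 1 ≤ n)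
    (hL : ((S : Set U) \ L).encard ≤ (n + 1 : ℕ)) (hm : m * m ≤ #S) :
    ∃ T : Fin m → Finset U, Pairwise (Disjoint on T) ∧
      ∀ j, T j ⊆ S ∧ #(T j) = m ∧ ((T j : Set U) \ L).encard ≤ n := by
  set B := S.filter (· ∉ L)
  have hB : ∀ T ⊆ S, (T : Set U) \ L = ↑(T ∩ B) := fun T hT => by
    ext x
    simp only [B, mem_sdiff, Finset.coe_inter, Finset.coe_filter, mem_inter_iff, Finset.mem_coe,
      mem_ofPred_eq]
    exact ⟨fun h => ⟨h.1, hT h.1, h.2⟩, fun h => ⟨h.1, h.2.2⟩⟩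
  have hBn : #B ≤ n + 1 := by
    rwa [hB S subset_rfl, Finset.inter_eq_right.2 (Finset.filter_subset _ S),
      encard_coe_eq_coe_finsetCard, Nat.cast_le] at hL
  by_cases hBm : #B ≤ m
  · obtain ⟨T, hdisj, hT⟩ := exists_pairwise_disjoint_blocks (Finset.filter_subset _ S) hBm hm
    refine ⟨T, hdisj, fun j => ⟨(hT j).1, (hT j).2.1, ?_⟩⟩
    rw [hB _ (hT j).1, encard_coe_eq_coe_finsetCard]
    exact_mod_cast (hT j).2.2.trans hn
  · -- Here the noise level is at least the block size, so any blocks will do.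
    obtain ⟨T, hdisj, hT⟩ := exists_pairwise_disjoint_blocks (Finset.empty_subset S) m.zero_le hm
    refine ⟨T, hdisj, fun j => ⟨(hT j).1, (hT j).2.1, ?_⟩⟩
    calc ((T j : Set U) \ L).encard ≤ (T j : Set U).encard := encard_le_encard sdiff_subset
      _ = m := by rw [encard_coe_eq_coe_finsetCard, (hT j).2.1]
      _ ≤ n := by exact_mod_cast (by omega : m ≤ n)

lemma le_NC_of_mul_self_le_card {S : Finset U} {n m : ℕ} (hn : 1 ≤ n)
    (hcons : (Consistent 𝒞 S (n + 1)).Nonempty) (hcl : (NoisyClosure 𝒞 S (n + 1)).Finite)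
    (hm : m * m ≤ #S) : (m : ℕ∞) ≤ NC 𝒞 n := by
  by_contra! hlt
  obtain ⟨L, hL⟩ := hcons
  obtain ⟨T, hdisj, hT⟩ := exists_blocks_encard_diff_le hn hL.2 hm
  refine hlt.not_ge (le_NC_of_pairwise_disjoint hn S.finite_toSet ⟨L, hL⟩ hcl (fun j => T j)
    (fun j l h => Finset.disjoint_coe.2 (hdisj h)) (fun j => Finset.coe_subset.2 (hT j).1)
    fun j => noisyClosure_infinite_of_NC_lt (T j).finite_toSet ⟨L, hL.1, (hT j).2.2⟩ ?_)
  rwa [encard_coe_eq_coe_finsetCard, (hT j).2.1]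

lemma le_NC_of_mul_self_le_NC_succ {n m : ℕ} (hn : 1 ≤ n)
    (h : ((m * m : ℕ) : ℕ∞) ≤ NC 𝒞 (n + 1)) : (m : ℕ∞) ≤ NC 𝒞 n := by
  rcases Nat.eq_zero_or_pos m with rfl | hm
  · simp
  have hlt : ((m * m - 1 : ℕ) : ℕ∞) < NC 𝒞 (n + 1) :=
    lt_of_lt_of_le (by exact_mod_cast Nat.sub_one_lt (Nat.mul_pos hm hm).ne') h
  rw [NC, lt_biSup_iff] at hlt
  obtain ⟨S, ⟨hS, hcons, hcl⟩, hSm⟩ := hlt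
  obtain ⟨S, rfl⟩ := hS.exists_finset_coe
  rw [encard_coe_eq_coe_finsetCard, Nat.cast_lt] at hSm
  exact le_NC_of_mul_self_le_card hn hcons hcl (by omega)

end NoisyClosure

theorem stmt4_general {U : Type*} (𝒞 : Set (Set U)) (i : ℕ) (hi : 2 ≤ i) :
    (NC 𝒞 i ≠ ⊤ → ((Nat.sqrt (NC 𝒞 i).toNat : ℕ∞) ≤ NC 𝒞 (i - 1))) ∧
    (NC 𝒞 i = ⊤ → NC 𝒞 (i - 1) = ⊤) := by
  obtain ⟨n, rfl⟩ : ∃ n, i = n + 1 := ⟨i - 1, by omega⟩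
  have hn : 1 ≤ n := by omega
  rw [Nat.add_sub_cancel]
  refine ⟨fun hfin => le_NC_of_mul_self_le_NC_succ hn ?_, fun htop =>
    ENat.eq_top_iff_forall_ge.2 fun m => le_NC_of_mul_self_le_NC_succ hn (htop ▸ le_top)⟩
  calc (((NC 𝒞 (n + 1)).toNat.sqrt * (NC 𝒞 (n + 1)).toNat.sqrt : ℕ) : ℕ∞)
      ≤ (NC 𝒞 (n + 1)).toNat := by exact_mod_cast Nat.sqrt_le _
    _ = NC 𝒞 (n + 1) := ENat.natCast_toNat hfin

theorem stmt4 {U : Type*} [Countable U] (𝒞 : Set (Set U)) (i : ℕ) (hi : 2 ≤ i) :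
    (NC 𝒞 i ≠ ⊤ → ((Nat.sqrt (NC 𝒞 i).toNat : ℕ∞) ≤ NC 𝒞 (i - 1))) ∧
    (NC 𝒞 i = ⊤ → NC 𝒞 (i - 1) = ⊤) :=
  stmt4_general 𝒞 i hi
end

section
/- If NC_i(𝒞) < ∞, then the algorithm G that outputs an arbitrary element of ⟨S_t⟩_{𝒞,i} \ S_t whenever this set is nonempty uniformly generates with noise level i for 𝒞, with correct outputs at all times t > NC_i(𝒞). -/
open Set Classical

lemma seenSet_eq_prefix {U : Type*} (x : ℕ → U) (t : ℕ) :
    {u | u ∈ prefixList x t} = seenSet x t := by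
  ext u
  simp [prefixList, seenSet, Set.mem_image, Nat.lt_succ_iff, eq_comm]

lemma key_correct {U : Type*} (𝒞 : Set (Set U)) (i : ℕ)
    (G : List U → U)
    (hG : ∀ l : List U,
      (NoisyClosure 𝒞 {u | u ∈ l} i \ {u | u ∈ l}).Nonempty →
      G l ∈ NoisyClosure 𝒞 {u | u ∈ l} i \ {u | u ∈ l}) :
    ∀ K ∈ 𝒞, ∀ x : ℕ → U, IsNoisyEnum K i x → ∀ t : ℕ,
      NC 𝒞 i < (t : ℕ∞) → G (prefixList x t) ∈ K \ seenSet x t := by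
  intro K hK x hx t ht
  obtain ⟨hinj, hsub, hnoise⟩ := hx
  set S := seenSet x t with hS
  have hSfin : S.Finite := (Set.finite_Iic t).image x
  have hScard : S.encard = (t + 1 : ℕ) := by
    rw [hS, seenSet, Set.InjOn.encard_image (hinj.injOn),
      Set.Finite.encard_eq_coe_toFinset_card (Set.finite_Iic t)]
    simp
  have hKcons : K ∈ Consistent 𝒞 S i := by
    refine ⟨hK, le_trans (Set.encard_le_encard ?_) hnoise⟩
    intro u hu
    exact ⟨Set.image_subset_range x _ hu.1, hu.2⟩
  have hne : (Consistent 𝒞 S i).Nonempty := ⟨K, hKcons⟩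
  have hNCltS : NC 𝒞 i < S.encard := by
    rw [hScard]
    calc NC 𝒞 i < (t : ℕ∞) := ht
    _ ≤ ((t + 1 : ℕ) : ℕ∞) := by exact_mod_cast Nat.le_succ t
  have hinf : (NoisyClosure 𝒞 S i).Infinite := by
    by_contra hfin
    rw [Set.not_infinite] at hfin
    have : S.encard ≤ NC 𝒞 i := by
      apply le_iSup₂ (f := fun (S : Set U) (_ : S ∈ _) => S.encard)
      exact ⟨hSfin, hne, hfin⟩
    exact absurd this (not_le.mpr hNCltS)
  have hsubK : NoisyClosure 𝒞 S i ⊆ K := by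
    rw [NoisyClosure, if_pos hne]
    exact Set.biInter_subset_of_mem hKcons
  have hdiff : (NoisyClosure 𝒞 S i \ S).Nonempty :=
    (hinf.diff hSfin).nonempty
  have := hG (prefixList x t) (by rwa [seenSet_eq_prefix])
  rw [seenSet_eq_prefix] at this
  exact ⟨hsubK this.1, this.2⟩

theorem stmt8 {U : Type*} [Countable U] (𝒞 : Set (Set U))
    (h𝒞 : ∀ L ∈ 𝒞, L.Infinite) (i : ℕ) (hNC : NC 𝒞 i < ⊤)
    (G : List U → U)
    (hG : ∀ l : List U,
      (NoisyClosure 𝒞 {u | u ∈ l} i \ {u | u ∈ l}).Nonempty →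
      G l ∈ NoisyClosure 𝒞 {u | u ∈ l} i \ {u | u ∈ l}) :
    UniformGen 𝒞 i G ∧
    (∀ K ∈ 𝒞, ∀ x : ℕ → U, IsNoisyEnum K i x → ∀ t : ℕ,
      NC 𝒞 i < (t : ℕ∞) → G (prefixList x t) ∈ K \ seenSet x t) := by
  have key := key_correct 𝒞 i G hG
  refine ⟨?_, key⟩
  set n := (NC 𝒞 i).toNat with hn
  have hNCn : NC 𝒞 i = (n : ℕ∞) := (ENat.coe_toNat hNC.ne).symm
  exact ⟨n + 1, fun K hK x hx t ht => key K hK x hx t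
    (hNCn ▸ Nat.cast_lt.mpr (Nat.lt_of_lt_of_le (Nat.lt_succ_self n) ht))⟩
end

section
/- If NC_i(𝒞) = ∞, then no algorithm uniformly generates with noise level i for 𝒞. -/
open Set Classical

/-!
Suppose `G` generates correctly from time `t₀` on, for every language of `𝒞` and every noisy
enumeration of it. Take a finite sample `S` with more than `t₀` elements whose noisy closure `C` is
finite, and feed `G` the elements of `S` followed by its own outputs. Inductively, every input seen
so far lies in `S ∪ C`, hence has at most `i` points outside any language `K` consistent with `S`
(as `C ⊆ K`), so it is the prefix of a noisy enumeration of `K`. Since `t₀` does not depend on `K`,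
the next output is a new element of every such `K`, that is, a new element of `C`. The run is then
an injective sequence in the finite set `S ∪ C`.
-/

open Function

lemma Set.Infinite.exists_injective_range_eq {U : Type*} [Countable U] {A : Set U}
    (hA : A.Infinite) : ∃ e : ℕ → U, Injective e ∧ range e = A := by
  have := hA.to_subtype
  obtain ⟨_⟩ := nonempty_denumerable A
  let f := (Denumerable.eqv A).symm
  exact ⟨Subtype.val ∘ f, Subtype.val_injective.comp f.injective,
    by rw [range_comp, f.range_eq_univ, image_univ, Subtype.range_coe]⟩

section NoisyClosure

variable {U : Type*} {𝒞 : Set (Set U)} {S K : Set U} {i : ℕ}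

lemma noisyClosure_subset (hK : K ∈ Consistent 𝒞 S i) : NoisyClosure 𝒞 S i ⊆ K := by
  rw [NoisyClosure, if_pos ⟨K, hK⟩]
  exact biInter_subset_of_mem hK

lemma mem_noisyClosure {a : U} (hS : (Consistent 𝒞 S i).Nonempty)
    (ha : ∀ K ∈ Consistent 𝒞 S i, a ∈ K) : a ∈ NoisyClosure 𝒞 S i := by
  rw [NoisyClosure, if_pos hS]
  exact mem_iInter₂.mpr ha

lemma encard_diff_le_of_subset_union_noisyClosure {T : Set U} (hK : K ∈ Consistent 𝒞 S i)
    (hT : T ⊆ S ∪ NoisyClosure 𝒞 S i) : (T \ K).encard ≤ i := by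
  refine (encard_mono ?_).trans hK.2
  rintro a ⟨haT, haK⟩
  exact ⟨(hT haT).resolve_right fun haC => haK (noisyClosure_subset hK haC), haK⟩

lemma exists_finset_lt_card_of_NC_eq_top (hNC : NC 𝒞 i = ⊤) (n : ℕ) :
    ∃ S : Finset U, (Consistent 𝒞 S i).Nonempty ∧ (NoisyClosure 𝒞 S i).Finite ∧ n < S.card := by
  have hn : (n : ℕ∞) < NC 𝒞 i := hNC ▸ ENat.natCast_lt_top n
  simp only [NC, lt_iSup_iff, mem_ofPred_eq, exists_prop] at hn
  obtain ⟨S, ⟨hSfin, hS, hC⟩, hcard⟩ := hn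
  rw [hSfin.encard_eq_coe_toFinset_card, Nat.cast_lt] at hcard
  exact ⟨hSfin.toFinset, by simpa using hS, by simpa using hC, hcard⟩

end NoisyClosure

section Enumerations

variable {U : Type*} {x y : ℕ → U} {t : ℕ}

lemma prefixList_congr (h : EqOn x y (Iic t)) : prefixList x t = prefixList y t :=
  List.map_congr_left fun _ hj => h (Nat.lt_succ_iff.mp (List.mem_range.mp hj))

lemma seenSet_eq_image_Iio (x : ℕ → U) (t : ℕ) : seenSet x t = x '' Iio (t + 1) := by
  rw [seenSet, ← Order.Iio_succ, Order.succ_eq_add_one]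

lemma injOn_Iio_of_forall_notMem_image_Iio (h : ∀ j < t, x j ∉ x '' Iio j) :
    InjOn x (Iio t) := by
  intro a ha b hb hab
  by_contra hne
  rcases lt_or_gt_of_ne hne with hlt | hlt
  exacts [h b hb ⟨a, hlt, hab⟩, h a ha ⟨b, hlt, hab.symm⟩]

lemma injective_of_forall_notMem_image_Iio (h : ∀ t, x t ∉ x '' Iio t) : Injective x :=
  fun a b hab => injOn_Iio_of_forall_notMem_image_Iio (t := a + b + 1) (fun j _ => h j)
    (by simp only [mem_Iio]; omega) (by simp only [mem_Iio]; omega) hab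

/-- Continue the prefix with an enumeration of the unseen part of `K`. -/
lemma exists_isNoisyEnum_eqOn [Countable U] {K : Set U} {i : ℕ} (hK : K.Infinite)
    (hinj : InjOn x (Iic t)) (hnoise : (seenSet x t \ K).encard ≤ i) :
    ∃ y, IsNoisyEnum K i y ∧ EqOn y x (Iic t) := by
  obtain ⟨e, he, hrange⟩ : ∃ e : ℕ → U, Injective e ∧ range e = K \ seenSet x t :=
    (hK.sdiff ((finite_Iic t).image x)).exists_injective_range_eq
  set y : ℕ → U := fun j => if j ≤ t then x j else e (j - (t + 1)) with hy
  have hy_seen : ∀ j ≤ t, y j ∈ seenSet x t := fun j hj => by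
    simp only [hy, if_pos hj]
    exact mem_image_of_mem x hj
  have hy_new : ∀ j, t < j → y j ∈ K \ seenSet x t := fun j hj => by
    simp only [hy, if_neg (not_le.mpr hj)]
    exact hrange ▸ mem_range_self _
  have hrange_y : range y = seenSet x t ∪ K := by
    rw [← union_sdiff_self]
    refine (range_subset_iff.mpr fun j => ?_).antisymm (union_subset ?_ ?_)
    · rcases le_or_gt j t with hj | hj
      exacts [Or.inl (hy_seen j hj), Or.inr (hy_new j hj)]
    · rintro _ ⟨j, hj, rfl⟩
      exact ⟨j, if_pos hj⟩
    · rw [← hrange]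
      rintro _ ⟨n, rfl⟩
      exact ⟨n + (t + 1), by simp only [hy]; rw [if_neg (by omega), Nat.add_sub_cancel]⟩
  refine ⟨y, ⟨?_, ?_, ?_⟩, fun j hj => if_pos hj⟩
  · intro a b hab
    rcases le_or_gt a t with ha | ha <;> rcases le_or_gt b t with hb | hb
    · exact hinj ha hb (by simpa [hy, ha, hb] using hab)
    · exact absurd (hab ▸ hy_seen a ha) (hy_new b hb).2
    · exact absurd (hab ▸ hy_seen b hb) (hy_new a ha).2
    · have := he (by simpa [hy, not_le.mpr ha, not_le.mpr hb] using hab)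
      omega
  · exact hrange_y ▸ subset_union_right
  · rwa [hrange_y, union_sdiff_right]

end Enumerations

section Generation

variable {U : Type*} {𝒞 : Set (Set U)} {i : ℕ} {G : List U → U}

/-- `UniformGen 𝒞 i G` unfolds to `∃ t₀, GeneratesFrom 𝒞 i G t₀`. -/
def GeneratesFrom (𝒞 : Set (Set U)) (i : ℕ) (G : List U → U) (t₀ : ℕ) : Prop :=
  ∀ K ∈ 𝒞, ∀ x : ℕ → U, IsNoisyEnum K i x → ∀ t ≥ t₀, G (prefixList x t) ∈ K \ seenSet x t

lemma GeneratesFrom.mem_diff_seenSet [Countable U] {t₀ t : ℕ} {K : Set U} {x : ℕ → U}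
    (hG : GeneratesFrom 𝒞 i G t₀) (hK𝒞 : K ∈ 𝒞) (hK : K.Infinite) (ht : t₀ ≤ t)
    (hinj : InjOn x (Iic t)) (hnoise : (seenSet x t \ K).encard ≤ i) :
    G (prefixList x t) ∈ K \ seenSet x t := by
  obtain ⟨y, hy, hyx⟩ := exists_isNoisyEnum_eqOn hK hinj hnoise
  rw [← prefixList_congr hyx, seenSet, ← hyx.image_eq]
  exact hG K hK𝒞 y hy t ht

noncomputable def selfFed (G : List U → U) (s : List U) : ℕ → U
  | t =>
    if h : t < s.length then s[t]
    else G ((List.range t).attach.map fun j => selfFed G s j.1)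
  termination_by t => t
  decreasing_by exact List.mem_range.mp j.2

variable {s : List U} {t : ℕ}

lemma selfFed_of_lt (h : t < s.length) : selfFed G s t = s[t] := by
  rw [selfFed, dif_pos h]

lemma selfFed_succ_of_le (h : s.length ≤ t + 1) :
    selfFed G s (t + 1) = G (prefixList (selfFed G s) t) := by
  rw [selfFed, dif_neg (by omega)]
  simp [prefixList]

lemma selfFed_mem_diff_of_lt (hs : s.Nodup) (h : t < s.length) :
    selfFed G s t ∈ {a | a ∈ s} \ selfFed G s '' Iio t := by
  refine ⟨by simp [selfFed_of_lt h], ?_⟩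
  rintro ⟨j, hj, hjt⟩
  rw [selfFed_of_lt h, selfFed_of_lt ((mem_Iio.mp hj).trans h), hs.getElem_inj_iff] at hjt
  exact (mem_Iio.mp hj).ne hjt

lemma selfFed_mem_diff_image_Iio [Countable U] {S : Set U} {t₀ : ℕ}
    (hG : GeneratesFrom 𝒞 i G t₀) (h𝒞 : ∀ L ∈ 𝒞, L.Infinite) (hS : (Consistent 𝒞 S i).Nonempty)
    (hs : s.Nodup) (hsS : ∀ a ∈ s, a ∈ S) (hlen : t₀ < s.length) (t : ℕ) :
    selfFed G s t ∈ (S ∪ NoisyClosure 𝒞 S i) \ selfFed G s '' Iio t := by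
  induction t using Nat.strong_induction_on with
  | _ t ih =>
  rcases lt_or_ge t s.length with ht | ht
  · obtain ⟨hmem, hnew⟩ := selfFed_mem_diff_of_lt (G := G) hs ht
    exact ⟨Or.inl (hsS _ hmem), hnew⟩
  obtain ⟨t, rfl⟩ := Nat.exists_eq_add_one_of_ne_zero (by omega : t ≠ 0)
  have hseen : seenSet (selfFed G s) t ⊆ S ∪ NoisyClosure 𝒞 S i := by
    rw [seenSet_eq_image_Iio]
    rintro _ ⟨j, hj, rfl⟩
    exact (ih j hj).1
  have hinj : InjOn (selfFed G s) (Iic t) := by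
    rw [← Order.Iio_succ, Order.succ_eq_add_one]
    exact injOn_Iio_of_forall_notMem_image_Iio fun j hj => (ih j hj).2
  have hK : ∀ K ∈ Consistent 𝒞 S i, selfFed G s (t + 1) ∈ K \ seenSet (selfFed G s) t :=
    fun K hK => selfFed_succ_of_le ht ▸ hG.mem_diff_seenSet hK.1 (h𝒞 K hK.1) (by omega) hinj
      (encard_diff_le_of_subset_union_noisyClosure hK hseen)
  obtain ⟨K, hK₀⟩ := hS
  refine ⟨Or.inr (mem_noisyClosure ⟨K, hK₀⟩ fun K hK' => (hK K hK').1), ?_⟩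
  rw [← seenSet_eq_image_Iio]
  exact (hK K hK₀).2

end Generation

theorem stmt9 {U : Type*} [Countable U] (𝒞 : Set (Set U))
    (h𝒞 : ∀ L ∈ 𝒞, L.Infinite) (i : ℕ) (hNC : NC 𝒞 i = ⊤) :
    ¬ ∃ G : List U → U, UniformGen 𝒞 i G := by
  rintro ⟨G, t₀, hG⟩
  obtain ⟨S, hS, hC, hcard⟩ := exists_finset_lt_card_of_NC_eq_top hNC t₀
  have hrun := selfFed_mem_diff_image_Iio (G := G) hG h𝒞 hS S.nodup_toList
    (fun _ => Finset.mem_toList.mp) (by rwa [Finset.length_toList])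
  have hinj : Injective (selfFed G S.toList) :=
    injective_of_forall_notMem_image_Iio fun t => (hrun t).2
  exact infinite_range_of_injective hinj <|
    (S.finite_toSet.union hC).subset (range_subset_iff.mpr fun t => (hrun t).1)
end

section
/- Suppose 𝒞 = ⋃_{j∈ℕ} 𝒞_j for an increasing sequence 𝒞₀ ⊆ 𝒞₁ ⊆ ⋯, and for each j there is an algorithm G_j that uniformly generates with noise level i for 𝒞_j with uniform time t*(𝒞_j). Then the algorithm G defined by G(x₀,…,x_t) = G_{j_t}(x₀,…,x_t), where j_t = max({0} ∪ {j ≤ t : t*(𝒞_j) ≤ t}), non-uniformly generates with noise level i for 𝒞. -/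
open Set Classical

theorem stmt12 {U : Type*} [Countable U] (𝒞 : Set (Set U)) (i : ℕ)
    (𝒞seq : ℕ → Set (Set U)) (hmono : Monotone 𝒞seq) (hunion : 𝒞 = ⋃ j, 𝒞seq j)
    (Gj : ℕ → List U → U) (tstar : ℕ → ℕ)
    (hGj : ∀ j, ∀ K ∈ 𝒞seq j, ∀ x : ℕ → U, IsNoisyEnum K i x →
      ∀ t ≥ tstar j, Gj j (prefixList x t) ∈ K \ seenSet x t) :
    NonUniformGen 𝒞 i
      (fun l => Gj (((Finset.range (l.length - 1 + 1)).filter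
        (fun j => tstar j ≤ l.length - 1)).sup id) l) := by
  intro K hK
  rw [hunion] at hK
  obtain ⟨j0, hj0⟩ := Set.mem_iUnion.mp hK
  refine ⟨max j0 (tstar j0), fun x hx t ht => ?_⟩
  have hlen : (prefixList x t).length = t + 1 := by
    simp [prefixList]
  have hts : t + 1 - 1 = t := by omega
  simp only [hlen, hts]
  set s := (Finset.range (t + 1)).filter (fun j => tstar j ≤ t) with hs
  have hj0mem : j0 ∈ s := by
    simp only [hs, Finset.mem_filter, Finset.mem_range]
    exact ⟨by omega, by omega⟩
  have hne : s.Nonempty := ⟨j0, hj0mem⟩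
  obtain ⟨b, hb, hbeq⟩ := Finset.exists_mem_eq_sup s hne id
  rw [hbeq]
  simp only [id] at *
  have hble : tstar b ≤ t := (Finset.mem_filter.mp hb).2
  have hj0b : j0 ≤ b := by
    have := Finset.le_sup (f := id) hj0mem
    rw [← hbeq]; exact this
  exact hGj b K (hmono hj0b hj0) x hx t hble
end

section
/- Let U = ℕ × ℕ, B_c = {(c,i) : i ∈ ℕ}, and 𝒞 = {⋃_{c∈x} B_c : x ⊆ ℕ, x ≠ ∅}. Then 𝒞 is not non-uniformly generatable with noise level 1: no generator algorithm G satisfies that for every K ∈ 𝒞 there exists t* such that for every enumeration of K with at most one extraneous string and all t ≥ t*, the output is an unseen element of K. -/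
open Set Classical

/-! Feed `G` the points `(c, 0)`, `c ∈ C`, for a finite set of columns `C`, and let `f C` be
the column of its answer. It suffices to find a set `A` of columns such that for arbitrarily
large `C` all of `C` except possibly `f C` lies in `A`, while `f C ∉ A`: listing these points
first and then the rest of `⋃ c ∈ A, B c` enumerates that language with at most one noisy point,
and at time `#C - 1` the generator answers outside the language.

If some column `c` is the answer for arbitrarily large `C`, take `A = {c}ᶜ`. Otherwise
`f C → ∞` as `#C → ∞`, and we present blocks of consecutive columns `[n_m, n_{m+1})`, each so
long that its answer `v_m` is at least `n_m`, and start the next block after `v_m`. Then block `m`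
contains no `v_k` with `k ≠ m`, and `A = (range v)ᶜ` works. -/

theorem List.Nodup.exists_injective_extension {α : Type*} [Countable α] {l : List α}
    (hl : l.Nodup) {D : Set α} (hD : D.Infinite) (hlD : ∀ a ∈ l, a ∉ D) :
    ∃ x : ℕ → α, Function.Injective x ∧ Set.range x = {a | a ∈ l} ∪ D ∧
      (List.range l.length).map x = l := by
  have := hD.to_subtype
  obtain ⟨e⟩ : Nonempty (ℕ ≃ D) := nonempty_equiv_of_countable
  set n := l.length
  let x : ℕ → α := fun i => if h : i < n then l[i] else e (i - n)
  have x_of_lt {i : ℕ} (h : i < n) : x i = l[i] := dif_pos h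
  have x_of_ge {i : ℕ} (h : n ≤ i) : x i = e (i - n) := dif_neg (not_lt.2 h)
  have mem_l_iff (i : ℕ) : x i ∈ l ↔ i < n := by
    refine ⟨fun hi => ?_, fun hi => x_of_lt hi ▸ List.getElem_mem hi⟩
    by_contra! hni
    exact hlD _ hi (x_of_ge hni ▸ (e _).2)
  refine ⟨x, fun i j hij => ?_, ?_, ?_⟩
  · have hn : i < n ↔ j < n := by rw [← mem_l_iff, ← mem_l_iff, hij]
    by_cases hi : i < n
    · rw [x_of_lt hi, x_of_lt (hn.1 hi)] at hij
      exact (hl.getElem_inj_iff).1 hij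
    · rw [x_of_ge (not_lt.1 hi), x_of_ge (not_lt.1 (hi ∘ hn.2))] at hij
      have := e.injective (Subtype.ext hij)
      omega
  · ext a
    refine ⟨?_, ?_⟩
    · rintro ⟨i, rfl⟩
      by_cases hi : i < n
      · exact Or.inl ((mem_l_iff i).2 hi)
      · exact Or.inr (x_of_ge (not_lt.1 hi) ▸ (e _).2)
    · rintro (ha | ha)
      · obtain ⟨i, hi, rfl⟩ := List.getElem_of_mem ha
        exact ⟨i, x_of_lt hi⟩
      · refine ⟨n + e.symm ⟨a, ha⟩, ?_⟩
        rw [x_of_ge (Nat.le_add_right _ _), Nat.add_sub_cancel_left, Equiv.apply_symm_apply]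
  · exact List.ext_getElem (by simp [n]) fun i hi _ => by
      rw [List.getElem_map, List.getElem_range, x_of_lt (by simpa using hi)]

noncomputable def bottomRow (C : Finset ℕ) : List (ℕ × ℕ) := C.toList.map (·, 0)

theorem mem_bottomRow {C : Finset ℕ} {p : ℕ × ℕ} : p ∈ bottomRow C ↔ p.1 ∈ C ∧ p.2 = 0 := by
  obtain ⟨a, b⟩ := p
  simp [bottomRow, eq_comm]

theorem nodup_bottomRow (C : Finset ℕ) : (bottomRow C).Nodup :=
  C.nodup_toList.map fun _ _ h => congrArg Prod.fst h

theorem length_bottomRow (C : Finset ℕ) : (bottomRow C).length = C.card := by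
  simp [bottomRow]

theorem mem_biUnion_column {A : Set ℕ} {p : ℕ × ℕ} : p ∈ ⋃ c ∈ A, column c ↔ p.1 ∈ A := by
  simp [column]

theorem biUnion_column_infinite {A : Set ℕ} (hA : A.Nonempty) : (⋃ c ∈ A, column c).Infinite := by
  obtain ⟨a, ha⟩ := hA
  refine infinite_of_injective_forall_mem (f := fun i : ℕ => (a, i)) ?_ fun i => ?_
  · exact fun i j h => congrArg Prod.snd h
  · exact mem_biUnion_column.2 ha

theorem exists_isNoisyEnum_bottomRow {A : Set ℕ} (hA : A.Nonempty) {C : Finset ℕ} {v : ℕ}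
    (hC : ↑C ⊆ insert v A) :
    ∃ x : ℕ → ℕ × ℕ, IsNoisyEnum (⋃ c ∈ A, column c) 1 x ∧
      (List.range C.card).map x = bottomRow C := by
  set K := ⋃ c ∈ A, column c
  obtain ⟨x, hx, hrange, hprefix⟩ := (nodup_bottomRow C).exists_injective_extension
    ((biUnion_column_infinite hA).sdiff (bottomRow C).finite_toSet) fun _ h h' => h'.2 h
  refine ⟨x, ⟨hx, ?_, ?_⟩, length_bottomRow C ▸ hprefix⟩
  · rw [hrange]
    exact fun p hp => (_root_.em (p ∈ bottomRow C)).imp id fun h => ⟨hp, h⟩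
  · have noise_subset : range x \ K ⊆ {(v, 0)} := by
      rintro ⟨c, i⟩ ⟨hp, hpK⟩
      rw [hrange] at hp
      obtain ⟨hc, rfl⟩ := mem_bottomRow.1 (hp.resolve_right fun h => hpK h.1)
      have : c = v := (hC hc).resolve_right fun h => hpK (mem_biUnion_column.2 h)
      rw [this, mem_singleton_iff]
    simpa using encard_le_encard noise_subset

def IsFoolingSet (f : Finset ℕ → ℕ) (A : Set ℕ) : Prop :=
  ∀ m, ∃ C : Finset ℕ, m ≤ C.card ∧ ↑C ⊆ insert (f C) A ∧ f C ∉ A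

theorem IsFoolingSet.nonempty {f : Finset ℕ → ℕ} {A : Set ℕ} (hA : IsFoolingSet f A) :
    A.Nonempty := by
  obtain ⟨C, hcard, hC, -⟩ := hA 2
  by_contra! hA
  rw [hA, insert_empty_eq, Finset.coe_subset_singleton] at hC
  have := (Finset.card_le_card hC).trans_eq (Finset.card_singleton _)
  omega

theorem not_nonUniformGen_of_isFoolingSet {G : List (ℕ × ℕ) → ℕ × ℕ} {A : Set ℕ}
    (hA : IsFoolingSet (fun C => (G (bottomRow C)).1) A) :
    ¬ NonUniformGen columnCollection 1 G := by
  intro hG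
  obtain ⟨t₀, ht₀⟩ := hG _ ⟨A, hA.nonempty, rfl⟩
  obtain ⟨C, hcard, hC, hout⟩ := hA (t₀ + 1)
  obtain ⟨x, hx, hprefix⟩ := exists_isNoisyEnum_bottomRow hA.nonempty hC
  have prefix_eq : prefixList x (C.card - 1) = bottomRow C := by
    rw [prefixList, Nat.sub_add_cancel (by omega), hprefix]
  have answer_mem := (ht₀ x hx (C.card - 1) (by omega)).1
  rw [prefix_eq, mem_biUnion_column] at answer_mem
  exact hout answer_mem

namespace FoolingBlocks

variable (f : Finset ℕ → ℕ) (N : ℕ → ℕ)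

def blockStart : ℕ → ℕ
  | 0 => 0
  | m + 1 =>
    let n := blockStart m
    n + (m + N n) + f (Finset.Ico n (n + (m + N n))) + 1

def block (m : ℕ) : Finset ℕ :=
  Finset.Ico (blockStart f N m) (blockStart f N m + (m + N (blockStart f N m)))

theorem blockStart_succ (m : ℕ) :
    blockStart f N (m + 1) = blockStart f N m + (m + N (blockStart f N m)) + f (block f N m) + 1 :=
  rfl

theorem monotone_blockStart : Monotone (blockStart f N) :=
  monotone_nat_of_le_succ fun m => by rw [blockStart_succ]; omega

theorem card_block (m : ℕ) : (block f N m).card = m + N (blockStart f N m) := by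
  simp [block]

theorem block_subset (m : ℕ) :
    ↑(block f N m) ⊆ Ico (blockStart f N m) (blockStart f N (m + 1)) := by
  intro a ha
  simp only [block, Finset.coe_Ico, mem_Ico] at ha
  rw [blockStart_succ]
  exact ⟨ha.1, by omega⟩

variable {f N}

theorem apply_block_mem (hN : ∀ n C, N n ≤ Finset.card C → n ≤ f C) (m : ℕ) :
    f (block f N m) ∈ Ico (blockStart f N m) (blockStart f N (m + 1)) := by
  refine ⟨hN _ _ ?_, ?_⟩
  · rw [card_block]
    exact Nat.le_add_left _ _
  · rw [blockStart_succ]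
    omega

theorem eq_of_mem_Ico_blockStart {a k m : ℕ}
    (hk : a ∈ Ico (blockStart f N k) (blockStart f N (k + 1)))
    (hm : a ∈ Ico (blockStart f N m) (blockStart f N (m + 1))) : k = m := by
  by_contra hkm
  exact (monotone_blockStart f N).pairwise_disjoint_on_Ico_succ hkm |>.ne_of_mem
    (by simpa using hk) (by simpa using hm) rfl

theorem isFoolingSet (hN : ∀ n C, N n ≤ Finset.card C → n ≤ f C) :
    IsFoolingSet f (range fun m => f (block f N m))ᶜ := by
  intro m
  refine ⟨block f N m, ?_, fun a ha => ?_, fun h => h ⟨m, rfl⟩⟩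
  · rw [card_block]
    exact Nat.le_add_right _ _
  · refine or_iff_not_imp_right.2 fun hv => ?_
    obtain ⟨k, rfl⟩ := not_not.1 hv
    rw [eq_of_mem_Ico_blockStart (apply_block_mem hN k) (block_subset f N m ha)]

end FoolingBlocks

theorem exists_isFoolingSet (f : Finset ℕ → ℕ) : ∃ A, IsFoolingSet f A := by
  by_cases h : ∃ c, ∀ m, ∃ C : Finset ℕ, m ≤ C.card ∧ f C = c
  · obtain ⟨c, hc⟩ := h
    refine ⟨{c}ᶜ, fun m => ?_⟩
    obtain ⟨C, hcard, rfl⟩ := hc m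
    exact ⟨C, hcard, fun a _ => _root_.em (a = f C), fun h => h rfl⟩
  · push Not at h
    choose β hβ using h
    refine ⟨_, FoolingBlocks.isFoolingSet (N := fun n => (Finset.range n).sup β) ?_⟩
    intro n C hC
    by_contra! hlt
    exact hβ (f C) C ((Finset.le_sup (Finset.mem_range.2 hlt)).trans hC) rfl

theorem stmt15 :
    ¬ ∃ G : List (ℕ × ℕ) → ℕ × ℕ, NonUniformGen columnCollection 1 G := by
  rintro ⟨G, hG⟩
  obtain ⟨A, hA⟩ := exists_isFoolingSet fun C => (G (bottomRow C)).1
  exact not_nonUniformGen_of_isFoolingSet hA hG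
end

section
/- There exists a collection 𝒞 (over a countable universe) that is uniformly generatable without noise but is not non-uniformly generatable with noise level 1 (hence not uniformly generatable with noise level 1). -/
open Set Classical

/-!
Without noise every revealed point lies in the target union of columns, so a generator may stay
in the column of the first point, above every row revealed so far.

With one noisy point allowed, diagonalise against a generator `G`: feed it the prefixes made of
`k + 1` points from the `k`-th block of columns `{Nat.pair k i | i}`, and choose the union of
columns `X` so that, for infinitely many `k`, `X` contains all but at most one column of block `k`
(that column carries the single noisy point) but not the column in which `G` answers. Such `X`
exists after passing to an infinite set `S` of blocks on which "the block of `G`'s answer" is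
injective whenever it lands in `S`.
-/

theorem exists_infinite_injOn_inter_preimage {α : Type*} [Infinite α] (f : α → α) :
    ∃ S : Set α, S.Infinite ∧ InjOn f (S ∩ f ⁻¹' S) := by
  by_cases hfiber : ∃ a, (f ⁻¹' {a}).Infinite
  · obtain ⟨a, ha⟩ := hfiber
    refine ⟨f ⁻¹' {a} \ {a}, ha.sdiff (finite_singleton a), ?_⟩
    rintro y ⟨⟨hy, -⟩, -, hfy⟩
    exact absurd hy hfy
  · simp only [not_exists, not_infinite] at hfiber
    have hrange : (range f).Infinite := fun h =>
      infinite_univ (by simpa using h.preimage' fun a _ => hfiber a)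
    have := hrange.to_subtype
    refine ⟨range (rangeSplitting f), infinite_range_of_injective (rangeSplitting_injective f), ?_⟩
    rintro _ ⟨⟨a, rfl⟩, -⟩ _ ⟨⟨b, rfl⟩, -⟩ hab
    rw [apply_rangeSplitting f, apply_rangeSplitting f] at hab
    rw [Subtype.ext hab]

theorem exists_nonempty_omitting_values_almost_containing_fibers {α β : Type*} [Infinite β]
    (π : α → β) (hπ : ∀ k, (π ⁻¹' {k}).Nontrivial) (v : β → α) :
    ∃ X : Set α, X.Nonempty ∧ {k | v k ∉ X ∧ (π ⁻¹' {k} \ X).Subsingleton}.Infinite := by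
  obtain ⟨S, hS, hinj⟩ := exists_infinite_injOn_inter_preimage (π ∘ v)
  -- each fiber over `S` contains at most one of the values `v j`, `j ∈ S`
  have hfiber : ∀ k ∈ S, (π ⁻¹' {k} \ (π ⁻¹' S \ v '' S)).Subsingleton := by
    rintro k hk a ⟨ha, haX⟩ b ⟨hb, hbX⟩
    rw [mem_preimage, mem_singleton_iff] at ha hb
    simp only [mem_sdiff, mem_preimage, ha, hb, hk, true_and, not_not] at haX hbX
    obtain ⟨i, hi, rfl⟩ := haX
    obtain ⟨j, hj, rfl⟩ := hbX
    rw [hinj ⟨hi, by simpa [ha]⟩ ⟨hj, by simpa [hb]⟩ (ha.trans hb.symm)]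
  refine ⟨π ⁻¹' S \ v '' S, ?_, hS.mono fun k hk => ⟨fun hv => hv.2 ⟨k, hk, rfl⟩, hfiber k hk⟩⟩
  obtain ⟨k, hk⟩ := hS.nonempty
  obtain ⟨a, ha, b, hb, hab⟩ := hπ k
  by_contra! hempty
  exact hab (hfiber k hk ⟨ha, by simp [hempty]⟩ ⟨hb, by simp [hempty]⟩)

theorem exists_isNoisyEnum_prefixList {U : Type*} [Countable U] {K : Set U} (hK : K.Infinite)
    {l : List U} (hl : l.Nodup) {n t : ℕ} (hlen : l.length = t + 1)
    (hnoise : ({a | a ∈ l} \ K).encard ≤ n) :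
    ∃ x : ℕ → U, IsNoisyEnum K n x ∧ prefixList x t = l := by
  have := (hK.sdiff l.finite_toSet).to_subtype
  obtain ⟨e⟩ := nonempty_equiv_of_countable (α := ℕ) (β := ↥(K \ {a | a ∈ l}))
  set x : ℕ → U := fun m => l.getD m (e (m - l.length))
  have hx_lt : ∀ m (hm : m < l.length), x m = l[m] := fun m hm => l.getD_eq_getElem _ hm
  have hx_ge : ∀ m, l.length ≤ m → x m = e (m - l.length) := fun m hm => l.getD_eq_default _ hm
  have hx_mem : ∀ m, x m ∈ l ∨ x m ∈ K \ {a | a ∈ l} := by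
    intro m
    rcases lt_or_ge m l.length with hm | hm
    · exact .inl (hx_lt m hm ▸ l.getElem_mem hm)
    · exact .inr (hx_ge m hm ▸ (e _).2)
  refine ⟨x, ⟨?_, ?_, ?_⟩, ?_⟩
  · intro i j hij
    rcases lt_or_ge i l.length with hi | hi <;> rcases lt_or_ge j l.length with hj | hj
    · rw [hx_lt i hi, hx_lt j hj] at hij
      exact (hl.getElem_inj_iff).1 hij
    · exact absurd (hij ▸ hx_lt i hi ▸ l.getElem_mem hi) (hx_ge j hj ▸ (e _).2.2)
    · exact absurd (hij ▸ hx_lt j hj ▸ l.getElem_mem hj) (hx_ge i hi ▸ (e _).2.2)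
    · rw [hx_ge i hi, hx_ge j hj] at hij
      have := e.injective (Subtype.ext hij)
      omega
  · intro a ha
    by_cases hal : a ∈ l
    · obtain ⟨m, hm, rfl⟩ := List.mem_iff_getElem.1 hal
      exact ⟨m, hx_lt m hm⟩
    · refine ⟨e.symm ⟨a, ha, hal⟩ + l.length, ?_⟩
      rw [hx_ge _ (by omega), Nat.add_sub_cancel, e.apply_symm_apply]
  · refine le_trans (encard_mono ?_) hnoise
    rintro _ ⟨⟨m, rfl⟩, hmK⟩
    exact ⟨(hx_mem m).resolve_right fun h => hmK h.1, hmK⟩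
  · refine List.ext_getElem (by simp [prefixList, hlen]) fun m hm _ => ?_
    simp only [prefixList, List.getElem_map, List.getElem_range]
    exact hx_lt m _

theorem biUnion_column (X : Set ℕ) : ⋃ c ∈ X, column c = Prod.fst ⁻¹' X := by
  ext p
  simp [column]

theorem mem_columnCollection_iff {L : Set (ℕ × ℕ)} :
    L ∈ columnCollection ↔ ∃ X : Set ℕ, X.Nonempty ∧ L = Prod.fst ⁻¹' X := by
  simp only [columnCollection, biUnion_column, mem_ofPred_eq]

theorem infinite_preimage_fst {X : Set ℕ} (hX : X.Nonempty) :
    (Prod.fst ⁻¹' X : Set (ℕ × ℕ)).Infinite := by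
  rw [← prod_univ]
  exact Set.infinite_prod.2 (.inr ⟨infinite_univ, hX⟩)

theorem IsNoisyEnum.range_subset_of_noiseless {U : Type*} {K : Set U} {x : ℕ → U}
    (hx : IsNoisyEnum K 0 x) : range x ⊆ K := by
  simpa [sdiff_eq_empty] using hx.2.2

theorem UniformGen.nonUniformGen {U : Type*} {𝒞 : Set (Set U)} {i : ℕ} {G : List U → U}
    (hG : UniformGen 𝒞 i G) : NonUniformGen 𝒞 i G := by
  obtain ⟨t0, ht0⟩ := hG
  exact fun K hK => ⟨t0, ht0 K hK⟩

def columnGenerator (l : List (ℕ × ℕ)) : ℕ × ℕ := (l.headI.1, (l.map Prod.snd).sum + 1)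

theorem uniformGen_columnGenerator : UniformGen columnCollection 0 columnGenerator := by
  refine ⟨0, fun K hK x hx t _ => ?_⟩
  obtain ⟨X, -, rfl⟩ := mem_columnCollection_iff.1 hK
  have hhead : (prefixList x t).headI = x 0 := by
    simp [prefixList, List.range_succ_eq_map]
  refine ⟨?_, ?_⟩
  · show (prefixList x t).headI.1 ∈ X
    rw [hhead]
    exact hx.range_subset_of_noiseless ⟨0, rfl⟩
  · rintro ⟨s, hs, hxs⟩
    have hrow : (x s).2 ≤ ((prefixList x t).map Prod.snd).sum :=
      List.le_sum_of_mem (List.mem_map_of_mem (List.mem_map.2 ⟨s, by simpa [Nat.lt_succ_iff] using hs, rfl⟩))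
    rw [hxs, columnGenerator] at hrow
    omega

def blockPrefix (k : ℕ) : List (ℕ × ℕ) := (List.range (k + 1)).map fun i => (Nat.pair k i, 0)

theorem nodup_blockPrefix (k : ℕ) : (blockPrefix k).Nodup :=
  List.nodup_range.map fun i j hij => by simpa using congrArg Prod.fst hij

theorem encard_blockPrefix_sdiff_le (k : ℕ) (X : Set ℕ) :
    ({a | a ∈ blockPrefix k} \ Prod.fst ⁻¹' X).encard
      ≤ ((fun c => c.unpair.1) ⁻¹' {k} \ X).encard := by
  refine le_trans (encard_mono ?_) (encard_image_le (fun c => (c, 0)) _)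
  rintro _ ⟨hmem, hX⟩
  obtain ⟨i, -, rfl⟩ := List.mem_map.1 hmem
  exact ⟨Nat.pair k i, ⟨by simp, hX⟩, rfl⟩

theorem not_nonUniformGen_columnCollection (G : List (ℕ × ℕ) → ℕ × ℕ) :
    ¬ NonUniformGen columnCollection 1 G := by
  intro hG
  obtain ⟨X, hX, hbad⟩ := exists_nonempty_omitting_values_almost_containing_fibers
    (fun c => c.unpair.1) (fun k => ⟨Nat.pair k 0, by simp, Nat.pair k 1, by simp, by simp⟩)
    (fun k => (G (blockPrefix k)).1)
  obtain ⟨t0, ht0⟩ := hG _ (mem_columnCollection_iff.2 ⟨X, hX, rfl⟩)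
  obtain ⟨k, ⟨hvX, hfiber⟩, hk⟩ := hbad.exists_gt t0
  obtain ⟨x, hx, hprefix⟩ := exists_isNoisyEnum_prefixList (n := 1) (t := k) (infinite_preimage_fst hX)
    (nodup_blockPrefix k) (by simp [blockPrefix])
    ((encard_blockPrefix_sdiff_le k X).trans (by simpa using encard_le_one_iff_subsingleton.2 hfiber))
  have hgen := (ht0 x hx k hk.le).1
  rw [hprefix] at hgen
  exact hvX hgen

theorem stmt16 :
    ∃ 𝒞 : Set (Set (ℕ × ℕ)), (∀ L ∈ 𝒞, L.Infinite) ∧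
      (∃ G : List (ℕ × ℕ) → ℕ × ℕ, UniformGen 𝒞 0 G) ∧
      ¬ (∃ G : List (ℕ × ℕ) → ℕ × ℕ, NonUniformGen 𝒞 1 G) ∧
      ¬ (∃ G : List (ℕ × ℕ) → ℕ × ℕ, UniformGen 𝒞 1 G) := by
  refine ⟨columnCollection, ?_, ⟨columnGenerator, uniformGen_columnGenerator⟩,
    fun ⟨G, hG⟩ => not_nonUniformGen_columnCollection G hG,
    fun ⟨G, hG⟩ => not_nonUniformGen_columnCollection G hG.nonUniformGen⟩
  intro L hL
  obtain ⟨X, hX, rfl⟩ := mem_columnCollection_iff.1 hL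
  exact infinite_preimage_fst hX
end
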